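/- arXiv:1806.07625 — 4 statements merged into one kernel-verified Lean document; each statement's English description precedes it below -/
import Mathlib

section
/- In a rooted phylogenetic network, a reticulate node is visible if and only if its unique child is a leaf, a visible tree node, or a visible redundant node. -/
open Relation

variable {V : Type*}

/-- Indegree of a node in a digraph given by an edge relation. -/
noncomputable def indeg (E : V → V → Prop) (v : V) : ℕ := Set.ncard {u | E u v}

/-- Outdegree of a node in a digraph given by an edge relation. -/
noncomputable def outdeg (E : V → V → Prop) (v : V) : ℕ := Set.ncard {w | E v w}

/-- A directed path from `x` to `y` in the digraph `E`, recorded as the list of its nodes. -/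
def IsDirPathE (E : V → V → Prop) (x y : V) (p : List V) : Prop :=
  p.head? = some x ∧ p.getLast? = some y ∧ p.Chain' E

/-- `Dom E root x y`: `x` is a dominator of `y`, i.e. `x` is an ancestor of `y` and every
directed path from `root` to `y` contains `x`. -/
def Dom (E : V → V → Prop) (root x y : V) : Prop :=
  Relation.TransGen E x y ∧ ∀ p, IsDirPathE E root y p → x ∈ p

/-- A rooted phylogenetic network: a rooted acyclic digraph with a unique root of indegree 0
and outdegree ≥ 1, in which every non-root node has indegree 1 or outdegree 1, and every node
is reachable from the root. -/
structure RPN (V : Type*) [Fintype V] where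
  E : V → V → Prop
  root : V
  acyclic : ∀ v, ¬ Relation.TransGen E v v
  root_indeg : indeg E root = 0
  root_outdeg : 1 ≤ outdeg E root
  degree_cond : ∀ v, v ≠ root → indeg E v = 1 ∨ outdeg E v = 1
  reachable : ∀ v, Relation.ReflTransGen E root v

namespace RPN

variable [Fintype V] (N : RPN V)

/-- A leaf: indegree 1 and outdegree 0. -/
def isLeaf (v : V) : Prop := indeg N.E v = 1 ∧ outdeg N.E v = 0

/-- A reticulate node: indegree at least 2. -/
def isRetic (v : V) : Prop := 2 ≤ indeg N.E v

/-- A tree node: the root, or a node of indegree 1 and outdegree at least 2. -/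
def isTreeN (v : V) : Prop := v = N.root ∨ (indeg N.E v = 1 ∧ 2 ≤ outdeg N.E v)

/-- A redundant node: indegree 1 and outdegree 1. -/
def isRedund (v : V) : Prop := indeg N.E v = 1 ∧ outdeg N.E v = 1

/-- A directed path from `x` to `y` in `N`. -/
def IsDirPath (x y : V) (p : List V) : Prop := IsDirPathE N.E x y p

/-- `x` lies on every directed path from the root to `y`. -/
def Dominates (x y : V) : Prop := ∀ p, N.IsDirPath N.root y p → x ∈ p

/-- A node is visible if it lies on every root-to-`ℓ` path for some leaf `ℓ`. -/
def Visible (x : V) : Prop := ∃ ℓ, N.isLeaf ℓ ∧ N.Dominates x ℓ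

/-- Tree-child: every non-leaf node has a child that is a leaf, a tree node, or a redundant
node. -/
def TreeChild : Prop :=
  ∀ u, ¬ N.isLeaf u → ∃ c, N.E u c ∧ (N.isLeaf c ∨ N.isTreeN c ∨ N.isRedund c)

/-- Edge of the subgraph induced by the tree nodes. -/
def treeE (u v : V) : Prop := N.E u v ∧ N.isTreeN u ∧ N.isTreeN v

/-- Undirected adjacency in the subgraph induced by the tree nodes. -/
def treeAdj (u v : V) : Prop := N.isTreeN u ∧ N.isTreeN v ∧ (N.E u v ∨ N.E v u)

/-- The tree-node component of a tree node `u`. -/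
def treeComp (u : V) : Set V := {v | Relation.ReflTransGen N.treeAdj u v}

/-- Edge of the subgraph induced by the reticulate nodes. -/
def reticE (u v : V) : Prop := N.E u v ∧ N.isRetic u ∧ N.isRetic v

/-- Undirected adjacency in the subgraph induced by the reticulate nodes. -/
def reticAdj (u v : V) : Prop := N.isRetic u ∧ N.isRetic v ∧ (N.E u v ∨ N.E v u)

/-- The reticulation component of a reticulate node `u`. -/
def reticComp (u : V) : Set V := {v | Relation.ReflTransGen N.reticAdj u v}

open Classical in
/-- The compression quotient map: each tree node is sent to its tree-node component, each
reticulate node to its reticulation component, and every other node to itself (as a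
singleton set). -/
noncomputable def comp (u : V) : Set V :=
  if N.isTreeN u then N.treeComp u else if N.isRetic u then N.reticComp u else {u}

/-- Edge relation of the compression `N̄`: an edge between the (distinct) images of the
endpoints of each edge of `N`. -/
def compE (A B : Set V) : Prop :=
  A ≠ B ∧ ∃ u v, N.E u v ∧ N.comp u = A ∧ N.comp v = B

/-- `N` is binary: reticulate nodes have indegree exactly 2, tree nodes outdegree exactly 2. -/
def Binary : Prop :=
  (∀ v, N.isRetic v → indeg N.E v = 2) ∧ (∀ v, N.isTreeN v → outdeg N.E v = 2)

/-- `N` is galled: every reticulate node `r` has a tree-node ancestor `w` with two internally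
disjoint directed paths from `w` to `r` in which all nodes except `r` are tree nodes. -/
def Galled : Prop :=
  ∀ r, N.isRetic r → ∃ w p q, N.isTreeN w ∧
    N.IsDirPath w r p ∧ N.IsDirPath w r q ∧ p ≠ q ∧
    (∀ x ∈ p.tail.dropLast, x ∉ q.tail.dropLast) ∧
    (∀ x ∈ p, x ≠ r → N.isTreeN x) ∧ (∀ x ∈ q, x ≠ r → N.isTreeN x)

/-- The spanning subgraph determined by a switching `s` choosing one parent of each
reticulate node. -/
def SpanE (s : V → V) (u v : V) : Prop := N.E u v ∧ (N.isRetic v → u = s v)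

/-- `S` is displayed (as a softwired cluster) at `u`: for some switching, the set of leaves
below `u` in the resulting spanning tree is exactly `S`. -/
def DisplayedAt (S : Set V) (u : V) : Prop :=
  ∃ s : V → V, (∀ v, N.isRetic v → N.E (s v) v) ∧
    {ℓ | N.isLeaf ℓ ∧ Relation.ReflTransGen (N.SpanE s) u ℓ} = S

/-- An isolated reticulate node: neither its parents nor its child are reticulate. -/
def IsolatedRetic (w : V) : Prop :=
  N.isRetic w ∧ (∀ x, N.E x w → ¬ N.isRetic x) ∧ (∀ y, N.E w y → ¬ N.isRetic y)

end RPN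

/-!
Let `c` be the unique child of the reticulate node `v`. If `c` has `v` as its only parent, every
root path through `c` passes through `v`, so a leaf dominated by `c` (or `c` itself, if it is a
leaf) is dominated by `v`. Conversely, if `v` dominates a leaf `ℓ`, every root-to-`ℓ` path
continues from `v` to `c`, so `c` dominates `ℓ`; and `c` has no parent `u ≠ v`, for otherwise a
root-to-`u` path followed by `u → c` and a `c`-to-`ℓ` path would avoid `v` by acyclicity.
So `c` has indegree one, which makes it a leaf, a tree node or a redundant node.
-/

section Degree

variable {E : V → V → Prop} {u v w c : V}

theorem eq_of_outdeg_eq_one [Finite V] (h : outdeg E v = 1) (hw : E v w) (hc : E v c) :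
    w = c :=
  (Set.ncard_le_one_iff).mp h.le hw hc

theorem eq_of_indeg_eq_one [Finite V] (h : indeg E v = 1) (hu : E u v) (hc : E c v) : u = c :=
  (Set.ncard_le_one_iff).mp h.le hu hc

theorem indeg_eq_one_of_forall_eq (hc : E c v) (h : ∀ u, E u v → u = c) : indeg E v = 1 :=
  Set.ncard_eq_one.mpr ⟨c, Set.ext fun u => ⟨h u, fun hu => hu ▸ hc⟩⟩

theorem reflTransGen_of_outdeg_eq_one [Finite V] (hout : outdeg E v = 1) (hc : E v c)
    (h : ReflTransGen E v w) (hvw : v ≠ w) : ReflTransGen E c w := by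
  obtain ⟨c', hc', hc'w⟩ := TransGen.head'_iff.mp
    ((reflTransGen_iff_eq_or_transGen.mp h).resolve_left hvw.symm)
  exact eq_of_outdeg_eq_one hout hc' hc ▸ hc'w

end Degree

namespace IsDirPathE

variable {E : V → V → Prop} {x y z u c : V} {p q : List V}

theorem exists_of_reflTransGen (h : ReflTransGen E x y) : ∃ p, IsDirPathE E x y p := by
  obtain ⟨l, hl, hlast⟩ := List.exists_isChain_cons_of_relationReflTransGen h
  exact ⟨x :: l, rfl, by rw [List.getLast?_eq_some_getLast (List.cons_ne_nil _ _), hlast], hl⟩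

theorem end_mem (h : IsDirPathE E x y p) : y ∈ p :=
  List.mem_of_getLast? h.2.1

theorem reflTransGen_from_start (h : IsDirPathE E x y p) (hz : z ∈ p) : ReflTransGen E x z :=
  List.IsChain.induction (ReflTransGen E x ·) p h.2.2 (fun _ _ hab hxa => hxa.tail hab)
    (fun hp => (List.head_eq_iff_head?_eq_some hp).mpr h.1 ▸ ReflTransGen.refl) z hz

theorem reflTransGen_to_end (h : IsDirPathE E x y p) (hz : z ∈ p) : ReflTransGen E z y :=
  List.IsChain.backwards_induction (ReflTransGen E · y) p h.2.2 (fun _ _ hab hby => hby.head hab)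
    (fun hp => (List.getLast_eq_iff_getLast?_eq_some hp).mpr h.2.1 ▸ ReflTransGen.refl) z hz

theorem append (hp : IsDirPathE E x u p) (huc : E u c) (hq : IsDirPathE E c y q) :
    IsDirPathE E x y (p ++ q) := by
  obtain ⟨hp₁, hp₂, hp₃⟩ := hp
  obtain ⟨hq₁, hq₂, hq₃⟩ := hq
  refine ⟨?_, ?_, List.isChain_append.mpr ⟨hp₃, hq₃, ?_⟩⟩
  · rw [List.head?_append, hp₁]; rfl
  · rw [List.getLast?_append, hq₂]; rfl
  · rw [hp₂, hq₁]
    simpa using huc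

theorem exists_pred_mem_of_ne_start (h : IsDirPathE E x y p) (hz : z ∈ p) (hzx : z ≠ x) :
    ∃ u ∈ p, E u z := by
  obtain ⟨i, hi, rfl⟩ := List.mem_iff_getElem.mp hz
  obtain ⟨j, rfl⟩ : ∃ j, i = j + 1 := Nat.exists_eq_succ_of_ne_zero <| by
    rintro rfl
    exact hzx (by simpa [List.head?_eq_getElem?, List.getElem?_eq_getElem hi] using h.1)
  exact ⟨p[j], List.getElem_mem _, h.2.2.getElem j hi⟩

theorem exists_succ_mem_of_ne_end (h : IsDirPathE E x y p) (hz : z ∈ p) (hzy : z ≠ y) :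
    ∃ w ∈ p, E z w := by
  obtain ⟨i, hi, rfl⟩ := List.mem_iff_getElem.mp hz
  have hi' : i + 1 < p.length := by
    by_contra hlast
    obtain rfl : i = p.length - 1 := by omega
    exact hzy (by simpa [List.getLast?_eq_getElem?, List.getElem?_eq_getElem hi] using h.2.1)
  exact ⟨p[i + 1], List.getElem_mem _, h.2.2.getElem i hi'⟩

end IsDirPathE

namespace RPN

variable [Fintype V] {N : RPN V} {u v c ℓ : V}

theorem ne_root_of_edge (h : N.E u v) : v ≠ N.root := by
  rintro rfl
  have hnone : {w | N.E w N.root} = ∅ := (Set.ncard_eq_zero (Set.toFinite _)).mp N.root_indeg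
  exact hnone.subset h

theorem not_reflTransGen_of_edge (h : N.E u v) : ¬ ReflTransGen N.E v u :=
  fun hvu => N.acyclic u (TransGen.head' h hvu)

theorem isRetic.outdeg_eq_one (hv : N.isRetic v) : outdeg N.E v = 1 := by
  unfold isRetic at hv
  have hroot : v ≠ N.root := by
    rintro rfl
    have := N.root_indeg
    omega
  have := N.degree_cond v hroot
  omega

theorem isTreeN.indeg_eq_one (hc : N.isTreeN c) (hroot : c ≠ N.root) : indeg N.E c = 1 :=
  (hc.resolve_left hroot).1

theorem isLeaf_or_isTreeN_or_isRedund (hc : indeg N.E c = 1) :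
    N.isLeaf c ∨ N.isTreeN c ∨ N.isRedund c := by
  unfold isLeaf isTreeN isRedund
  omega

theorem dominates_self (ℓ : V) : N.Dominates ℓ ℓ :=
  fun _ hp => IsDirPathE.end_mem hp

theorem Dominates.of_child (h : N.Dominates c ℓ) (hin : indeg N.E c = 1) (hc : N.E v c) :
    N.Dominates v ℓ := by
  intro p hp
  obtain ⟨u, hu, huc⟩ :=
    IsDirPathE.exists_pred_mem_of_ne_start hp (h p hp) (ne_root_of_edge hc)
  exact eq_of_indeg_eq_one hin huc hc ▸ hu

theorem Dominates.child (h : N.Dominates v ℓ) (hout : outdeg N.E v = 1) (hc : N.E v c)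
    (hvℓ : v ≠ ℓ) : N.Dominates c ℓ := by
  intro p hp
  obtain ⟨w, hw, hvw⟩ := IsDirPathE.exists_succ_mem_of_ne_end hp (h p hp) hvℓ
  exact eq_of_outdeg_eq_one hout hvw hc ▸ hw

theorem Dominates.indeg_child_eq_one (h : N.Dominates v ℓ) (hout : outdeg N.E v = 1)
    (hc : N.E v c) (hvℓ : v ≠ ℓ) : indeg N.E c = 1 := by
  obtain ⟨p, hp⟩ := IsDirPathE.exists_of_reflTransGen (N.reachable ℓ)
  obtain ⟨q, hq⟩ := IsDirPathE.exists_of_reflTransGen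
    (reflTransGen_of_outdeg_eq_one hout hc (hp.reflTransGen_to_end (h p hp)) hvℓ)
  have hvq : v ∉ q := fun hv => not_reflTransGen_of_edge hc (hq.reflTransGen_from_start hv)
  refine indeg_eq_one_of_forall_eq hc fun u hu => ?_
  by_contra huv
  obtain ⟨pu, hpu⟩ := IsDirPathE.exists_of_reflTransGen (N.reachable u)
  -- a root-to-`u` path avoids `v`, since otherwise `c` would reach its own parent `u`
  have hvpu : v ∉ pu := fun hv => not_reflTransGen_of_edge hu
    (reflTransGen_of_outdeg_eq_one hout hc (hpu.reflTransGen_to_end hv) (Ne.symm huv))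
  exact (List.mem_append.mp (h _ (hpu.append hu hq))).elim hvpu hvq

end RPN

/-- A reticulate node is visible if and only if its unique child is a leaf, a
visible tree node, or a visible redundant node. -/
theorem stmt3 [Fintype V] (N : RPN V) (v c : V) (hv : N.isRetic v) (hc : N.E v c) :
    N.Visible v ↔
      (N.isLeaf c ∨ (N.isTreeN c ∧ N.Visible c) ∨ (N.isRedund c ∧ N.Visible c)) := by
  have hout := hv.outdeg_eq_one
  constructor
  · rintro ⟨ℓ, hℓ, hdom⟩
    have hvℓ : v ≠ ℓ := by
      rintro rfl
      have := hℓ.2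
      omega
    have hcdom := hdom.child hout hc hvℓ
    rcases RPN.isLeaf_or_isTreeN_or_isRedund (hdom.indeg_child_eq_one hout hc hvℓ) with
      hleaf | htree | hred
    · exact Or.inl hleaf
    · exact Or.inr (Or.inl ⟨htree, ℓ, hℓ, hcdom⟩)
    · exact Or.inr (Or.inr ⟨hred, ℓ, hℓ, hcdom⟩)
  · rintro (hleaf | ⟨htree, ℓ, hℓ, hcdom⟩ | ⟨hred, ℓ, hℓ, hcdom⟩)
    · exact ⟨c, hleaf, (RPN.dominates_self c).of_child hleaf.1 hc⟩
    · exact ⟨ℓ, hℓ, hcdom.of_child (htree.indeg_eq_one (RPN.ne_root_of_edge hc)) hc⟩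
    · exact ⟨ℓ, hℓ, hcdom.of_child hred.1 hc⟩
end

section
/- Let N be a rooted phylogenetic network with no redundant nodes, over a taxon set of size n, with p tree-node components and q reticulation components. Then p − 1 ≤ q ≤ n + p − 1. -/
open Relation

variable {V : Type*}

/-!
Since every non-root tree node has a single parent, each tree-node component is an out-tree with
a unique top node (no tree-node parent); dually, since every reticulate node has a single child,
each reticulation component has a unique bottom node (no reticulate child). So `p` counts tops and
`q` counts bottoms. Without redundant nodes, the parent of a non-root top is a bottom and the child
of a bottom is a leaf or a non-root top, and both assignments are injective (a reticulate node has
one child, a non-reticulate non-root node one parent). Hence `p - 1 ≤ q ≤ n + (p - 1)`.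
-/

theorem Set.ncard_le_ncard_of_forall_subsingleton {α β : Type*} {s : Set α} {t : Set β}
    (r : α → β → Prop) (hs : ∀ a ∈ s, ∃ b ∈ t, r a b)
    (ht : ∀ b ∈ t, {a ∈ s | r a b}.Subsingleton) (htf : t.Finite := by toFinite_tac) :
    s.ncard ≤ t.ncard := by
  choose f hft hrf using hs
  have := htf.to_subtype
  rw [← Nat.card_coe_set_eq, ← Nat.card_coe_set_eq]
  refine Nat.card_le_card_of_injective (fun a : s => (⟨f a a.2, hft a a.2⟩ : t)) fun a a' h => ?_
  have hf : f a' a'.2 = f a a.2 := congrArg Subtype.val h.symm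
  exact Subtype.ext (ht _ (hft a a.2) ⟨a.2, hrf a a.2⟩ ⟨a'.2, hf ▸ hrf a' a'.2⟩)

namespace Relation

variable (E : V → V → Prop) (P : V → Prop)

def InducedAdj (u v : V) : Prop := P u ∧ P v ∧ (E u v ∨ E v u)

def IsInducedSource (t : V) : Prop := P t ∧ ∀ w, E w t → ¬ P w

variable {E P}

instance : Std.Symm (InducedAdj E P) where
  symm _ _ h := ⟨h.2.1, h.1, h.2.2.symm⟩

theorem inducedAdj_flip : InducedAdj (flip E) P = InducedAdj E P := by
  ext u v
  simp only [InducedAdj, flip, or_comm]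

theorem wellFounded_transGen_of_acyclic [Finite V] (hE : ∀ v, ¬ TransGen E v v) :
    WellFounded (TransGen E) :=
  haveI : Std.Irrefl (TransGen E) := ⟨hE⟩
  Finite.wellFounded_of_trans_of_irrefl _

theorem exists_isInducedSource_reflTransGen [Finite V] (hE : ∀ v, ¬ TransGen E v v) {u : V}
    (hu : P u) : ∃ t, IsInducedSource E P t ∧ ReflTransGen (InducedAdj E P) t u := by
  obtain ⟨t, ⟨ht, htu⟩, hmin⟩ := (wellFounded_transGen_of_acyclic hE).has_min
    {t | P t ∧ ReflTransGen (InducedAdj E P) t u} ⟨u, hu, .refl⟩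
  exact ⟨t, ⟨ht, fun w hw hPw => hmin w ⟨hPw, htu.head ⟨hPw, ht, .inl hw⟩⟩ (.single hw)⟩, htu⟩

section UniqueParent

variable (hpar : ∀ v, P v → ∀ a b, E a v → E b v → a = b)
include hpar

/-- With unique parents, an undirected path in the induced subgraph that starts at a source can
only ever step downwards, since a step up would lead to the parent already visited. -/
theorem IsInducedSource.reflTransGen_of_inducedAdj {t v : V} (ht : IsInducedSource E P t)
    (htv : ReflTransGen (InducedAdj E P) t v) : ReflTransGen E t v := by
  induction htv with
  | refl => exact .refl
  | @tail b c _ hbc ih =>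
    rcases hbc.2.2 with hbc' | hcb
    · exact ih.tail hbc'
    · rcases ih.cases_tail with rfl | ⟨d, htd, hdb⟩
      · exact absurd hbc.2.1 (ht.2 c hcb)
      · exact hpar b hbc.1 d c hdb hcb ▸ htd

theorem IsInducedSource.eq_of_reflTransGen (hE : ∀ v, ¬ TransGen E v v) {t t' : V}
    (ht : IsInducedSource E P t) (ht' : IsInducedSource E P t')
    (htt' : ReflTransGen (InducedAdj E P) t t') : t = t' := by
  have hdown := ht.reflTransGen_of_inducedAdj hpar htt'
  have hup := ht'.reflTransGen_of_inducedAdj hpar (Std.Symm.symm _ _ htt')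
  rcases reflTransGen_iff_eq_or_transGen.mp hdown with h | h
  · exact h.symm
  · exact absurd (h.trans_left hup) (hE t)

theorem ncard_inducedComponents_eq [Finite V] (hE : ∀ v, ¬ TransGen E v v) :
    {C : Set V | ∃ u, P u ∧ C = {v | ReflTransGen (InducedAdj E P) u v}}.ncard =
      {t | IsInducedSource E P t}.ncard := by
  have himage : {C : Set V | ∃ u, P u ∧ C = {v | ReflTransGen (InducedAdj E P) u v}} =
      (fun t => {v | ReflTransGen (InducedAdj E P) t v}) '' {t | IsInducedSource E P t} := by
    ext C
    constructor
    · rintro ⟨u, hu, rfl⟩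
      obtain ⟨t, ht, htu⟩ := exists_isInducedSource_reflTransGen hE hu
      exact ⟨t, ht, Set.ext fun v =>
        ⟨fun hv => (Std.Symm.symm _ _ htu).trans hv, fun hv => htu.trans hv⟩⟩
    · rintro ⟨t, ht, rfl⟩
      exact ⟨t, ht.1, rfl⟩
  rw [himage]
  refine Set.InjOn.ncard_image fun t ht t' ht' h => ht.eq_of_reflTransGen hpar hE ht' ?_
  exact (Set.ext_iff.mp h t').mpr .refl

end UniqueParent

end Relation

theorem eq_of_indeg_le_one [Finite V] {E : V → V → Prop} {v a b : V} (hv : indeg E v ≤ 1)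
    (ha : E a v) (hb : E b v) : a = b :=
  (Set.ncard_le_one (Set.toFinite _)).mp hv a ha b hb

theorem eq_of_outdeg_le_one [Finite V] {E : V → V → Prop} {v a b : V} (hv : outdeg E v ≤ 1)
    (ha : E v a) (hb : E v b) : a = b :=
  (Set.ncard_le_one (Set.toFinite _)).mp hv a ha b hb

theorem one_le_indeg_of_edge [Finite V] {E : V → V → Prop} {u v : V} (h : E u v) :
    1 ≤ indeg E v :=
  (Set.ncard_pos).mpr ⟨u, h⟩

theorem one_le_outdeg_of_edge [Finite V] {E : V → V → Prop} {u v : V} (h : E u v) :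
    1 ≤ outdeg E u :=
  (Set.ncard_pos).mpr ⟨v, h⟩

namespace RPN

variable [Fintype V] (N : RPN V)

abbrev IsTop (t : V) : Prop := IsInducedSource N.E N.isTreeN t

/-- A source for the reversed edges: a reticulate node with no reticulate child. -/
abbrev IsBottom (s : V) : Prop := IsInducedSource (flip N.E) N.isRetic s

variable {N}

theorem not_edge_to_root (u : V) : ¬ N.E u N.root :=
  Set.eq_empty_iff_forall_notMem.mp ((Set.ncard_eq_zero).mp N.root_indeg) u

theorem isTop_root : N.IsTop N.root :=
  ⟨.inl rfl, fun w hw _ => not_edge_to_root w hw⟩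

theorem exists_edge_of_ne_root {v : V} (hv : v ≠ N.root) : ∃ u, N.E u v := by
  rcases (N.reachable v).cases_tail with h | ⟨u, _, hu⟩
  · exact absurd h hv
  · exact ⟨u, hu⟩

theorem ne_root_of_isRetic {v : V} (hv : N.isRetic v) : v ≠ N.root := by
  rintro rfl
  have := N.root_indeg
  unfold isRetic at hv
  omega

theorem outdeg_eq_one_of_isRetic {v : V} (hv : N.isRetic v) : outdeg N.E v = 1 := by
  have := N.degree_cond v (ne_root_of_isRetic hv)
  unfold isRetic at hv
  omega

theorem not_isRetic_of_isTreeN {v : V} (hv : N.isTreeN v) : ¬ N.isRetic v := by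
  rcases hv with rfl | ⟨h1, _⟩
  · exact fun h => ne_root_of_isRetic h rfl
  · unfold isRetic
    omega

theorem indeg_eq_one_of_not_isRetic {u v : V} (huv : N.E u v) (hv : ¬ N.isRetic v) :
    indeg N.E v = 1 := by
  have := one_le_indeg_of_edge huv
  unfold isRetic at hv
  omega

theorem eq_of_edge_of_isTreeN {v a b : V} (hv : N.isTreeN v) (ha : N.E a v) (hb : N.E b v) :
    a = b :=
  eq_of_indeg_le_one (indeg_eq_one_of_not_isRetic ha (not_isRetic_of_isTreeN hv)).le ha hb

theorem eq_of_edge_of_isRetic {v a b : V} (hv : N.isRetic v) (ha : N.E v a) (hb : N.E v b) :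
    a = b :=
  eq_of_outdeg_le_one (outdeg_eq_one_of_isRetic hv).le ha hb

theorem ncard_treeComps :
    {C : Set V | ∃ u, N.isTreeN u ∧ C = N.treeComp u}.ncard = {t | N.IsTop t}.ncard :=
  ncard_inducedComponents_eq (fun _ hv _ _ => eq_of_edge_of_isTreeN hv) N.acyclic

theorem ncard_reticComps :
    {C : Set V | ∃ u, N.isRetic u ∧ C = N.reticComp u}.ncard = {s | N.IsBottom s}.ncard := by
  have hreticAdj : N.reticAdj = InducedAdj (flip N.E) N.isRetic :=
    inducedAdj_flip.symm
  have hacyc (v : V) : ¬ TransGen (flip N.E) v v := fun h =>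
    N.acyclic v (transGen_swap.mp h)
  simp only [reticComp, hreticAdj]
  exact ncard_inducedComponents_eq (fun _ hv _ _ => eq_of_edge_of_isRetic hv) hacyc

section NoRedundant

variable (hnr : ∀ v, ¬ N.isRedund v)
include hnr

theorem isRetic_of_edge_of_not_isTreeN {u w : V} (huw : N.E u w) (hu : ¬ N.isTreeN u) :
    N.isRetic u := by
  have hne : u ≠ N.root := fun h => hu (.inl h)
  obtain ⟨x, hxu⟩ := exists_edge_of_ne_root hne
  have hin := one_le_indeg_of_edge hxu
  have hout := one_le_outdeg_of_edge huw
  have hdeg := N.degree_cond u hne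
  have hred := hnr u
  simp only [isRedund, isTreeN, not_or, not_and] at hred hu
  unfold isRetic
  omega

theorem exists_isBottom_edge_of_isTop {t : V} (ht : N.IsTop t) (htr : t ≠ N.root) :
    ∃ s, N.IsBottom s ∧ N.E s t := by
  obtain ⟨s, hst⟩ := exists_edge_of_ne_root htr
  have hs := isRetic_of_edge_of_not_isTreeN hnr hst (ht.2 s hst)
  refine ⟨s, ⟨hs, fun w hsw => ?_⟩, hst⟩
  exact eq_of_edge_of_isRetic hs hst hsw ▸ not_isRetic_of_isTreeN ht.1

theorem exists_edge_isLeaf_or_isTop_of_isBottom {s : V} (hs : N.IsBottom s) :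
    ∃ c, c ∈ {v | N.isLeaf v} ∪ ({t | N.IsTop t} \ {N.root}) ∧ N.E s c := by
  obtain ⟨c, hsc⟩ : ∃ c, N.E s c :=
    (Set.ncard_pos).mp (outdeg_eq_one_of_isRetic hs.1).ge
  have hc : indeg N.E c = 1 := indeg_eq_one_of_not_isRetic hsc (hs.2 c hsc)
  refine ⟨c, ?_, hsc⟩
  have hred := hnr c
  simp only [isRedund, hc, true_and] at hred
  rcases Nat.lt_or_ge (outdeg N.E c) 2 with hout | hout
  · exact .inl ⟨hc, by omega⟩
  · refine .inr ⟨⟨.inr ⟨hc, hout⟩, fun w hwc hw => ?_⟩, fun h => not_edge_to_root s (h ▸ hsc)⟩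
    exact not_isRetic_of_isTreeN hw (eq_of_edge_of_isTreeN (.inr ⟨hc, hout⟩) hwc hsc ▸ hs.1)

theorem ncard_nonrootTops_le_ncard_bottoms :
    ({t | N.IsTop t} \ {N.root}).ncard ≤ {s | N.IsBottom s}.ncard :=
  Set.ncard_le_ncard_of_forall_subsingleton (fun t s => N.E s t)
    (fun _ ht => exists_isBottom_edge_of_isTop hnr ht.1 ht.2)
    (fun s _ t ⟨ht, hst⟩ _ ⟨_, hst'⟩ =>
      eq_of_edge_of_isRetic (isRetic_of_edge_of_not_isTreeN hnr hst (ht.1.2 s hst)) hst hst')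

theorem ncard_bottoms_le_ncard_leaves_union_nonrootTops :
    {s | N.IsBottom s}.ncard ≤ ({v | N.isLeaf v} ∪ ({t | N.IsTop t} \ {N.root})).ncard :=
  Set.ncard_le_ncard_of_forall_subsingleton N.E
    (fun _ hs => exists_edge_isLeaf_or_isTop_of_isBottom hnr hs)
    (fun c _ s ⟨hs, hsc⟩ _ ⟨_, hs'c⟩ =>
      eq_of_indeg_le_one (indeg_eq_one_of_not_isRetic hsc (hs.2 c hsc)).le hsc hs'c)

end NoRedundant

end RPN

/-- If `N` has no redundant nodes, `n` leaves, `p` tree-node components and `q`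
reticulation components, then `p - 1 ≤ q ≤ n + p - 1`. -/
theorem stmt6 [Fintype V] (N : RPN V) (hnr : ∀ v, ¬ N.isRedund v) (n p q : ℕ)
    (hn : n = Set.ncard {v | N.isLeaf v})
    (hp : p = Set.ncard {C : Set V | ∃ u, N.isTreeN u ∧ C = N.treeComp u})
    (hq : q = Set.ncard {C : Set V | ∃ u, N.isRetic u ∧ C = N.reticComp u}) :
    p - 1 ≤ q ∧ q ≤ n + p - 1 := by
  rw [RPN.ncard_treeComps] at hp
  rw [RPN.ncard_reticComps] at hq
  have htops := Set.ncard_sdiff_singleton_add_one (s := {t | N.IsTop t}) RPN.isTop_root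
  have hlower := RPN.ncard_nonrootTops_le_ncard_bottoms hnr
  have hupper := RPN.ncard_bottoms_le_ncard_leaves_union_nonrootTops hnr
  have hunion := Set.ncard_union_le {v | N.isLeaf v} ({t | N.IsTop t} \ {N.root})
  omega
end

section
/- Let N be a rooted phylogenetic network and let f map each node of N to its compression image (each tree node to its tree-node component, each reticulate node to its reticulation component, and each redundant node and leaf to itself). If P is a directed path in N, then the image of P under f, after removing consecutive repetitions, is a single node or a directed path in the compression of N. -/
open Relation

variable {V : Type*}

namespace List

variable {α β : Type*}

theorem head?_destutter' (R : α → α → Prop) [DecidableRel R] (a : α) (l : List α) :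
    (l.destutter' R a).head? = some a := by
  induction l generalizing a with
  | nil => rfl
  | cons b l ih => rw [destutter'_cons]; split_ifs <;> simp [ih]

/-- Every element skipped by `destutter'` equals the last element kept, so two consecutive kept
elements `A, B` also occur consecutively in the original list. -/
theorem isChain_destutter'_ne_of_isChain_cons {S : α → α → Prop} [DecidableRel (α := α) Ne]
    {a : α} {l : List α} (h : (a :: l).IsChain S) :
    (l.destutter' Ne a).IsChain (fun A B ↦ A ≠ B ∧ S A B) := by
  induction l generalizing a with
  | nil => exact .singleton a
  | cons b l ih =>
    rw [isChain_cons_cons] at h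
    obtain ⟨hab, hbl⟩ := h
    by_cases hne : a ≠ b
    · rw [destutter'_cons_pos _ hne, isChain_cons, head?_destutter']
      exact ⟨fun y hy ↦ Option.mem_some_iff.mp hy ▸ ⟨hne, hab⟩, ih hbl⟩
    · rw [destutter'_cons_neg _ hne]
      exact ih (not_not.mp hne ▸ hbl)

theorem isChain_destutter_map_ne {R : α → α → Prop} [DecidableRel (α := β) Ne] (f : α → β)
    {l : List α} (h : l.IsChain R) :
    ((l.map f).destutter Ne).IsChain (fun A B ↦ A ≠ B ∧ Relation.Map R f f A B) := by
  cases l with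
  | nil => exact .nil
  | cons a l =>
    rw [map_cons, destutter_cons']
    exact isChain_destutter'_ne_of_isChain_cons <|
      isChain_map_of_isChain f (fun u v huv ↦ ⟨u, v, huv, rfl, rfl⟩) h

end List

open Classical in
/-- The image under the compression quotient map of a directed path of `N`,
after removing consecutive repetitions, is a single node or a directed path of the
compression. -/
theorem stmt9 [Fintype V] (N : RPN V) (x y : V) (p : List V) (hp : N.IsDirPath x y p) :
    (List.destutter Ne (p.map N.comp)).length = 1 ∨
    (2 ≤ (List.destutter Ne (p.map N.comp)).length ∧
      (List.destutter Ne (p.map N.comp)).Chain' N.compE) := by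
  obtain ⟨hhead, -, hchain⟩ := hp
  have hne : p ≠ [] := by rintro rfl; simp at hhead
  have hlen : (List.destutter Ne (p.map N.comp)).length ≠ 0 := by
    simpa [List.destutter_eq_nil] using hne
  by_cases h1 : (List.destutter Ne (p.map N.comp)).length = 1
  · exact Or.inl h1
  · exact Or.inr ⟨by omega, List.isChain_destutter_map_ne N.comp hchain⟩
end

section
/- In a binary galled network, every reticulate node is inner: all of its parents belong to the same tree-node component. -/
open Relation

variable {V : Type*}

/-! The gall of a reticulate node `r` consists of two internally disjoint paths from a tree node
`w` to `r` through tree nodes only. Their last edges enter `r` from two distinct parents, each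
joined to `w` inside the tree-node component of `w`. In a binary network `r` has no other parent,
so all parents of `r` lie in that component. -/

theorem List.IsChain.nodup_of_acyclic {E : V → V → Prop} (hE : ∀ v, ¬ TransGen E v v)
    {l : List V} (hl : l.IsChain E) : l.Nodup := by
  refine (hl.imp fun _ _ => TransGen.single).pairwise.imp ?_
  rintro a _ h rfl
  exact hE a h

theorem List.Nodup.getLast_cons_eq_iff {a : V} {m : List V} (h : (a :: m).Nodup) :
    (a :: m).getLast (cons_ne_nil a m) = a ↔ m = [] := by
  refine ⟨fun hlast => ?_, fun hm => by simp [hm]⟩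
  by_contra hm
  rw [getLast_cons hm] at hlast
  exact (nodup_cons.1 h).1 (hlast ▸ getLast_mem hm)

theorem Set.eq_or_eq_of_ncard_eq_two {α : Type*} {s : Set α} {a b x : α} (hs : s.ncard = 2)
    (ha : a ∈ s) (hb : b ∈ s) (hab : a ≠ b) (hx : x ∈ s) : x = a ∨ x = b := by
  have hpair : {a, b} = s :=
    eq_of_subset_of_ncard_le (pair_subset ha hb) (by rw [hs, ncard_pair hab])
      (finite_of_ncard_ne_zero (by omega))
  rw [← hpair] at hx
  simpa using hx

theorem IsDirPathE.exists_eq_cons_append {E : V → V → Prop} {x y : V} {p : List V}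
    (hp : IsDirPathE E x y p) (hxy : x ≠ y) : ∃ m, p = x :: (m ++ [y]) := by
  obtain ⟨hhead, hlast, -⟩ := hp
  obtain ⟨t, rfl⟩ : ∃ t, p = x :: t := by
    cases p with
    | nil => simp at hhead
    | cons a t => exact ⟨t, by simpa using hhead⟩
  have ht : t ≠ [] := by
    rintro rfl
    exact hxy (by simpa using hlast)
  refine ⟨t.dropLast, ?_⟩
  rw [List.getLast?_cons, List.getLast?_eq_some_getLast ht, Option.getD_some, Option.some_inj] at hlast
  rw [← hlast, List.dropLast_append_getLast]

namespace RPN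

variable [Fintype V] (N : RPN V)

theorem not_isTreeN_of_isRetic {r : V} (hr : N.isRetic r) : ¬ N.isTreeN r := by
  rintro (rfl | ⟨hindeg, -⟩)
  · rw [isRetic, N.root_indeg] at hr
    omega
  · rw [isRetic, hindeg] at hr
    omega

theorem treeComp_eq_of_reflTransGen {a b : V} (h : ReflTransGen N.treeAdj a b) :
    N.treeComp a = N.treeComp b := by
  have : Std.Symm N.treeAdj := ⟨fun _ _ ⟨ha, hb, he⟩ => ⟨hb, ha, he.symm⟩⟩
  ext v
  exact ⟨(Std.Symm.symm _ _ h).trans, h.trans⟩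

theorem penultimate_of_isDirPath {w r : V} {m : List V} (hp : N.IsDirPath w r (w :: (m ++ [r])))
    (htree : ∀ x ∈ w :: (m ++ [r]), x ≠ r → N.isTreeN x) :
    N.E ((w :: m).getLast (List.cons_ne_nil w m)) r ∧
      N.isTreeN ((w :: m).getLast (List.cons_ne_nil w m)) ∧
      ReflTransGen N.treeAdj w ((w :: m).getLast (List.cons_ne_nil w m)) := by
  rw [← List.cons_append] at hp htree
  have hnodup := List.nodup_append.1 (hp.2.2.nodup_of_acyclic N.acyclic)
  have htree' : ∀ x ∈ w :: m, N.isTreeN x := fun x hx =>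
    htree x (List.mem_append_left _ hx) (hnodup.2.2 x hx r (List.mem_singleton_self r))
  obtain ⟨hchain, -, hlast⟩ := List.isChain_append.1 hp.2.2
  refine ⟨hlast _ (List.getLast?_eq_some_getLast _ ▸ rfl) r rfl, htree' _ (List.getLast_mem _), ?_⟩
  refine List.relationReflTransGen_of_exists_isChain_cons m ?_ rfl
  exact hchain.imp_of_mem_imp fun x y hx hy hxy => ⟨htree' x hx, htree' y hy, Or.inl hxy⟩

variable {N}

theorem Galled.exists_ne_parents_treeComp_eq (hgal : N.Galled) {r : V} (hr : N.isRetic r) :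
    ∃ w a b, a ≠ b ∧
      ∀ x ∈ ({a, b} : Set V), N.E x r ∧ N.isTreeN x ∧ N.treeComp x = N.treeComp w := by
  obtain ⟨w, p, q, hw, hp, hq, hpq, hdisj, hptree, hqtree⟩ := hgal r hr
  have hwr : w ≠ r := fun h => N.not_isTreeN_of_isRetic hr (h ▸ hw)
  obtain ⟨mp, rfl⟩ := hp.exists_eq_cons_append hwr
  obtain ⟨mq, rfl⟩ := hq.exists_eq_cons_append hwr
  simp only [List.tail_cons, List.dropLast_concat] at hdisj
  have hpnd : (w :: mp).Nodup := (hp.2.2.nodup_of_acyclic N.acyclic).sublist (by simp)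
  have hqnd : (w :: mq).Nodup := (hq.2.2.nodup_of_acyclic N.acyclic).sublist (by simp)
  obtain ⟨hpE, hpT, hpW⟩ := N.penultimate_of_isDirPath hp hptree
  obtain ⟨hqE, hqT, hqW⟩ := N.penultimate_of_isDirPath hq hqtree
  set a := (w :: mp).getLast (List.cons_ne_nil w mp)
  set b := (w :: mq).getLast (List.cons_ne_nil w mq)
  refine ⟨w, a, b, fun hab => ?_, ?_⟩
  · by_cases haw : a = w
    · -- then both paths are `[w, r]`
      have hbw : b = w := hab ▸ haw
      rw [hpnd.getLast_cons_eq_iff.1 haw, hqnd.getLast_cons_eq_iff.1 hbw] at hpq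
      exact hpq rfl
    · have hbw : b ≠ w := hab ▸ haw
      have ha : a ∈ mp := (List.mem_cons.1 (List.getLast_mem _)).resolve_left haw
      have hb : b ∈ mq := (List.mem_cons.1 (List.getLast_mem _)).resolve_left hbw
      exact hdisj a ha (hab ▸ hb)
  · rintro x (rfl | rfl)
    · exact ⟨hpE, hpT, (N.treeComp_eq_of_reflTransGen hpW).symm⟩
    · exact ⟨hqE, hqT, (N.treeComp_eq_of_reflTransGen hqW).symm⟩

theorem exists_forall_parent_treeComp_eq (hbin : N.Binary) (hgal : N.Galled) {r : V}
    (hr : N.isRetic r) : ∃ w, ∀ x, N.E x r → N.isTreeN x ∧ N.treeComp x = N.treeComp w := by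
  obtain ⟨w, a, b, hab, hparents⟩ := hgal.exists_ne_parents_treeComp_eq hr
  refine ⟨w, fun x hx => (hparents x ?_).2⟩
  exact Set.eq_or_eq_of_ncard_eq_two (hbin.1 r hr) (hparents a (by simp)).1
    (hparents b (by simp)).1 hab hx

end RPN

/-- In a binary galled network, every reticulate node is inner: all of its
parents are tree nodes lying in the same tree-node component. -/
theorem stmt16 [Fintype V] (N : RPN V) (hbin : N.Binary) (hgal : N.Galled) :
    ∀ r, N.isRetic r → ∀ u v, N.E u r → N.E v r →
      N.isTreeN u ∧ N.isTreeN v ∧ N.treeComp u = N.treeComp v := by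
  intro r hr u v hu hv
  obtain ⟨w, hparents⟩ := N.exists_forall_parent_treeComp_eq hbin hgal hr
  exact ⟨(hparents u hu).1, (hparents v hv).1, (hparents u hu).2.trans (hparents v hv).2.symm⟩
end
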